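/- Let H = (V,H) be a boolean representable simplicial complex of dimension ≥ 2 (i.e. containing a 3-element face). Then the geodesic distance between any two vertices in the graph of H (vertex set V, edges the 2-element faces) is at most 2. -/

import Mathlib

open scoped Classical

variable {V : Type}

def IsSC (faces : Set (Finset V)) : Prop :=
  (∀ v : V, ({v} : Finset V) ∈ faces) ∧
    ∀ ⦃X Y : Finset V⦄, X ∈ faces → Y ⊆ X → Y ∈ faces

def IsFlat (faces : Set (Finset V)) (F : Set V) : Prop :=
  ∀ I ∈ faces, (I : Set V) ⊆ F → ∀ p ∉ F, insert p I ∈ faces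

def cl (faces : Set (Finset V)) (X : Set V) : Set V :=
  ⋂₀ {F : Set V | IsFlat faces F ∧ X ⊆ F}

def BRep (faces : Set (Finset V)) : Prop :=
  ∀ X ∈ faces, ∃ (k : ℕ) (F : Fin (k + 1) → Set V) (x : Fin k → V),
    (∀ i, IsFlat faces (F i)) ∧ StrictMono F ∧ Function.Injective x ∧
    (∀ i : Fin k, x i ∈ F i.succ \ F i.castSucc) ∧
    X = Finset.image x Finset.univ

def skel (faces : Set (Finset V)) : SimpleGraph V where
  Adj p q := p ≠ q ∧ ({p, q} : Finset V) ∈ faces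
  symm := by
    constructor; rintro p q ⟨h1, h2⟩
    exact ⟨h1.symm, by rwa [Finset.pair_comm]⟩
  loopless := by constructor; rintro p ⟨h, _⟩; exact h rfl

def flatGraph (faces : Set (Finset V)) : SimpleGraph V where
  Adj p q := p ≠ q ∧ cl faces {p, q} ≠ Set.univ
  symm := by
    constructor; rintro p q ⟨h1, h2⟩
    exact ⟨h1.symm, by rwa [Set.pair_comm]⟩
  loopless := by constructor; rintro p ⟨h, _⟩; exact h rfl

/-!
Take a face with at least two elements. In its boolean representation as a transversal
`x₀, x₁, …` of a chain of flats `F₀ ⊂ F₁ ⊂ ⋯`, the flat `F₁` contains `x₀` but not `x₁`,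
so it is a proper nonempty flat. Since points are faces, flatness of `F₁` makes every vertex
of `F₁` adjacent to every vertex outside it; a graph containing a complete bipartite graph on
two nonempty sides has diameter at most `2`.
-/

theorem SimpleGraph.adj_or_exists_adj_adj_of_forall_adj_compl {α : Type*} (G : SimpleGraph α)
    {S : Set α} (hS : ∀ p ∈ S, ∀ q ∉ S, G.Adj p q) {a b : α} (ha : a ∈ S) (hb : b ∉ S)
    (u v : α) : G.Adj u v ∨ ∃ w, G.Adj u w ∧ G.Adj w v := by
  by_cases hu : u ∈ S <;> by_cases hv : v ∈ S
  · exact Or.inr ⟨b, hS u hu b hb, (hS v hv b hb).symm⟩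
  · exact Or.inl (hS u hu v hv)
  · exact Or.inl (hS v hv u hu).symm
  · exact Or.inr ⟨a, (hS a ha u hu).symm, hS a ha v hv⟩

theorem IsFlat.skel_adj {faces : Set (Finset V)} {F : Set V} (hF : IsFlat faces F)
    (hpt : ∀ v : V, ({v} : Finset V) ∈ faces) {p q : V} (hp : p ∈ F) (hq : q ∉ F) :
    (skel faces).Adj p q := by
  refine ⟨fun h => hq (h ▸ hp), ?_⟩
  rw [Finset.pair_comm]
  exact hF {p} (hpt p) (by simpa using hp) q hq

theorem BRep.exists_flat_mem_notMem {faces : Set (Finset V)} (hbr : BRep faces)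
    {X : Finset V} (hX : X ∈ faces) (hcard : 2 ≤ X.card) :
    ∃ (F : Set V) (a b : V), IsFlat faces F ∧ a ∈ F ∧ b ∉ F := by
  obtain ⟨k, F, x, hflat, -, hinj, hx, rfl⟩ := hbr X hX
  rw [Finset.card_image_of_injective _ hinj, Finset.card_univ, Fintype.card_fin] at hcard
  exact ⟨F ⟨1, by omega⟩, x ⟨0, by omega⟩, x ⟨1, by omega⟩, hflat _,
    (hx ⟨0, by omega⟩).1, (hx ⟨1, by omega⟩).2⟩

theorem brep_dist_le_two_general
    {faces : Set (Finset V)} (hsc : IsSC faces) (hbr : BRep faces)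
    (hdim : ∃ X ∈ faces, X.card = 3) (u v : V) :
    u = v ∨ (skel faces).Adj u v ∨
      ∃ w : V, (skel faces).Adj u w ∧ (skel faces).Adj w v := by
  obtain ⟨X, hX, hcard⟩ := hdim
  obtain ⟨F, a, b, hF, ha, hb⟩ := hbr.exists_flat_mem_notMem hX (by omega)
  exact Or.inr <| (skel faces).adj_or_exists_adj_adj_of_forall_adj_compl
    (fun p hp q hq => hF.skel_adj hsc.1 hp hq) ha hb u v

theorem brep_dist_le_two [Fintype V] [Nonempty V]
    {faces : Set (Finset V)} (hsc : IsSC faces) (hbr : BRep faces)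
    (hdim : ∃ X ∈ faces, X.card = 3) (u v : V) :
    u = v ∨ (skel faces).Adj u v ∨
      ∃ w : V, (skel faces).Adj u w ∧ (skel faces).Adj w v :=
  brep_dist_le_two_general hsc hbr hdim u v
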